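/- arXiv:1402.6783 — 8 statements merged into one kernel-verified Lean document; each statement's English description precedes it below -/
import Mathlib

section
/- The quotient of the set of valuations X → Σ by the equivalence relation ∼_C is finite; that is, there are only finitely many representative valuations [v]. -/
/-- `u ∼_C v`: there is an automorphism (bijection) of the alphabet which is invariant on the
constants `C` and maps `u` to `v` pointwise. -/
def EquivC {X Sig : Type} (C : Finset Sig) (u v : X → Sig) : Prop :=
  ∃ σ : Equiv.Perm Sig, (∀ c ∈ C, σ c = c) ∧ ∀ x, σ (u x) = v x

/-- `[v]`: the `∼_C` equivalence class of the valuation `v`. -/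
def eqClass {X Sig : Type} (C : Finset Sig) (v : X → Sig) : Set (X → Sig) :=
  {u | EquivC C u v}

/-! The class of `v` is determined by its equality type over `C`: which registers hold equal
letters and which hold which constants. There are finitely many such types, and two valuations
of the same type are related by a bijection, fixing `C`, between their (finite) sets of values
together with `C`; it extends to a permutation of the infinite alphabet. -/

theorem Quot.finite_of_map_eq_imp {α β : Type*} [Finite β] {r : α → α → Prop} (f : α → β)
    (h : ∀ a b, f a = f b → r a b) : Finite (Quot r) := by
  refine Finite.of_surjective (fun b : Set.range f => Quot.mk r b.2.choose) ?_
  rintro ⟨a⟩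
  exact ⟨⟨f a, a, rfl⟩, Quot.sound (h _ _ (Set.mem_range_self a).choose_spec)⟩

theorem Equiv.Perm.exists_apply_eq_of_eq_iff_eq {ι α : Type*} [Finite ι] [Infinite α]
    {w w' : ι → α} (h : ∀ i j, w i = w j ↔ w' i = w' j) :
    ∃ σ : Equiv.Perm α, ∀ i, σ (w i) = w' i := by
  let f : Set.range w ↪ α := ⟨fun a => w' a.2.choose, fun a b hab => Subtype.ext <| by
    rw [← a.2.choose_spec, ← b.2.choose_spec]
    exact (h _ _).2 hab⟩
  have hs : Cardinal.mk (Set.range w) < Cardinal.mk α :=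
    (Set.finite_range w).lt_aleph0.trans_le (Cardinal.aleph0_le_mk α)
  obtain ⟨σ, hσ⟩ := Cardinal.extend_function_of_lt f hs ⟨Equiv.refl α⟩
  exact ⟨σ, fun i => (hσ ⟨w i, i, rfl⟩).trans <| (h _ _).1 (Set.mem_range_self i).choose_spec⟩

def equalityType {X Sig : Type} (C : Finset Sig) (v : X → Sig) : X ⊕ C → X ⊕ C → Prop :=
  fun p q => Sum.elim v Subtype.val p = Sum.elim v Subtype.val q

theorem equivC_of_equalityType_eq {X Sig : Type} [Infinite Sig] [Finite X] {C : Finset Sig}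
    {u v : X → Sig} (h : equalityType C u = equalityType C v) : EquivC C u v := by
  obtain ⟨σ, hσ⟩ := Equiv.Perm.exists_apply_eq_of_eq_iff_eq
    (w := Sum.elim u Subtype.val) (w' := Sum.elim v Subtype.val)
    fun p q => iff_of_eq (congrFun (congrFun h p) q)
  exact ⟨σ, fun c hc => hσ (.inr ⟨c, hc⟩), fun x => hσ (.inl x)⟩

/-- The quotient of the set of valuations `X → Σ` by `∼_C` is finite: there are only
finitely many representative valuations `[v]`. -/
theorem quotient_equivC_finite {X Sig : Type} [Infinite Sig] [Finite X] (C : Finset Sig) :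
    Finite (Quot (fun u v : X → Sig => EquivC C u v)) :=
  Quot.finite_of_map_eq_imp (equalityType C) fun _ _ => equivC_of_equalityType_eq
end

section
/- Let v, w : X → Σ be valuations, d̄ = d_1⋯d_n ∈ Σ^n, and π an assignment. Then w ∈ ⟦π⟧_{v,d̄} if and only if σ∘w ∈ ⟦π⟧_{σ∘v, σ(d̄)} for every automorphism σ of Σ that is invariant on C, where σ(d̄) = σ(d_1)⋯σ(d_n). -/
/-- A term over registers `X`, formal parameters `p₁,…,pₙ`, and constants from the alphabet. -/
inductive Term (X Sig : Type) (n : ℕ) where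
  | reg (x : X)
  | par (i : Fin n)
  | const (c : Sig)

/-- The value of a term under a register valuation `v` and parameter valuation `d`. -/
def Term.val {X Sig : Type} {n : ℕ} (v : X → Sig) (d : Fin n → Sig) : Term X Sig n → Sig
  | .reg x => v x
  | .par i => d i
  | .const c => c

/-- All constants occurring in the term belong to `C`. -/
def Term.ConstIn {X Sig : Type} {n : ℕ} (C : Finset Sig) : Term X Sig n → Prop
  | .const c => c ∈ C
  | _ => True

/-- An atomic guard: an equality `e = f` or a disequality `e ≠ f` between terms. -/
inductive Atom (X Sig : Type) (n : ℕ) where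
  | eq (e f : Term X Sig n)
  | ne (e f : Term X Sig n)

/-- Satisfaction of an atomic guard. -/
def Atom.Sat {X Sig : Type} {n : ℕ} (v : X → Sig) (d : Fin n → Sig) : Atom X Sig n → Prop
  | .eq e f => Term.val v d e = Term.val v d f
  | .ne e f => Term.val v d e ≠ Term.val v d f

def Atom.ConstIn {X Sig : Type} {n : ℕ} (C : Finset Sig) : Atom X Sig n → Prop
  | .eq e f => Term.ConstIn C e ∧ Term.ConstIn C f
  | .ne e f => Term.ConstIn C e ∧ Term.ConstIn C f

/-- A guard is a finite conjunction of atomic guards. -/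
abbrev Guard (X Sig : Type) (n : ℕ) : Type := List (Atom X Sig n)

/-- `v, d ⊨ g`: every conjunct of the guard holds. -/
def Guard.Sat {X Sig : Type} {n : ℕ} (v : X → Sig) (d : Fin n → Sig) (g : Guard X Sig n) : Prop :=
  ∀ a ∈ g, Atom.Sat v d a

def Guard.ConstIn {X Sig : Type} {n : ℕ} (C : Finset Sig) (g : Guard X Sig n) : Prop :=
  ∀ a ∈ g, Atom.ConstIn C a

/-- An assignment `(x_{k_1} … x_{k_m}) ↦ (e_{l_1} … e_{l_m})`, as a list of pairs. -/
abbrev Assignment (X Sig : Type) (n : ℕ) : Type := List (X × Term X Sig n)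

/-- The assigned registers are pairwise distinct. -/
def Assignment.Wf {X Sig : Type} {n : ℕ} (π : Assignment X Sig n) : Prop :=
  (List.map Prod.fst π).Nodup

/-- `⟦π⟧_{v,d}`: the set of valuations `v'` with `v' (x_{k_i})` the value of `e_{l_i}` under `(v,d)`. -/
def Assignment.Sem {X Sig : Type} {n : ℕ} (π : Assignment X Sig n) (v : X → Sig)
    (d : Fin n → Sig) : Set (X → Sig) :=
  {v' | ∀ p ∈ π, v' p.1 = Term.val v d p.2}

def Assignment.ConstIn {X Sig : Type} {n : ℕ} (C : Finset Sig) (π : Assignment X Sig n) : Prop :=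
  ∀ p ∈ π, Term.ConstIn C (p.2 : Term X Sig n)
/-- Assignment semantics is invariant under automorphisms of the alphabet fixing the constants:
`w ∈ ⟦π⟧_{v,d̄}` iff `σ∘w ∈ ⟦π⟧_{σ∘v, σ(d̄)}`, for every automorphism `σ` invariant on `C`. -/
theorem assignment_sem_invariant {X Sig : Type} [Infinite Sig] [Finite X] (C : Finset Sig)
    {n : ℕ} (v w : X → Sig) (d : Fin n → Sig) (π : Assignment X Sig n)
    (hπC : Assignment.ConstIn C π) (hπ : Assignment.Wf π)
    (σ : Equiv.Perm Sig) (hσ : ∀ c ∈ C, σ c = c) :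
    w ∈ Assignment.Sem π v d ↔
      (fun x => σ (w x)) ∈ Assignment.Sem π (fun x => σ (v x)) (fun i => σ (d i)) := by
  have hval : ∀ e : Term X Sig n, Term.ConstIn C e →
      Term.val (fun x => σ (v x)) (fun i => σ (d i)) e = σ (Term.val v d e) := by
    intro e he
    cases e with
    | reg x => rfl
    | par i => rfl
    | const c => exact (hσ c he).symm
  constructor
  · intro h p hp
    simp only [hval p.2 (hπC p hp), h p hp]
  · intro h p hp
    have := h p hp
    rw [hval p.2 (hπC p hp)] at this
    exact σ.injective this
end

section
/- Let (Σ, A, X, L, l₀, Δ) be a register automaton, l, l' ∈ L, v, v' : X → Σ valuations, and α(d̄) a data symbol with d̄ = d_1⋯d_n. If ⟨l, v⟩ →^{α(d̄)} ⟨l', v'⟩, then ⟨l, σ∘v⟩ →^{α(σ(d̄))} ⟨l', σ∘v'⟩ for every automorphism σ of Σ that is invariant on C, where σ(d̄) = σ(d_1)⋯σ(d_n). -/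
/-- A transition `(l, α, g, π, l')` of a register automaton. -/
structure Transition (Sig X A L : Type) (arity : A → ℕ) where
  src : L
  act : A
  guard : Guard X Sig (arity act)
  assign : Assignment X Sig (arity act)
  tgt : L

def Transition.ConstIn {Sig X A L : Type} {arity : A → ℕ} (C : Finset Sig)
    (t : Transition Sig X A L arity) : Prop :=
  Guard.ConstIn C t.guard ∧ Assignment.ConstIn C t.assign

/-- A register automaton `(Σ, A, X, L, l₀, Δ)` over constants `C`: each action has an arity,
there is an initial location, and a finite set of transitions whose guards and assignments
only mention constants of `C` and assign pairwise distinct registers. -/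
structure RegisterAutomaton (Sig X A L : Type) (C : Finset Sig) where
  arity : A → ℕ
  init : L
  Δ : Set (Transition Sig X A L arity)
  finΔ : Δ.Finite
  wf : ∀ t ∈ Δ, Transition.ConstIn C t ∧ Assignment.Wf t.assign

/-- `⟨l, v⟩ →^{α(d)} ⟨l', v'⟩`: some transition `(l, α, g, π, l') ∈ Δ` satisfies
`v, d ⊨ g` and `v' ∈ ⟦π⟧_{v,d}`. -/
def RegisterAutomaton.Step {Sig X A L : Type} {C : Finset Sig}
    (RA : RegisterAutomaton Sig X A L C) (l : L) (v : X → Sig) (α : A)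
    (d : Fin (RA.arity α) → Sig) (l' : L) (v' : X → Sig) : Prop :=
  ∃ (g : Guard X Sig (RA.arity α)) (π : Assignment X Sig (RA.arity α)),
    (⟨l, α, g, π, l'⟩ : Transition Sig X A L RA.arity) ∈ RA.Δ ∧
      Guard.Sat v d g ∧ v' ∈ Assignment.Sem π v d

/-- One step on configurations, for some data symbol `α(d)`. -/
def RegisterAutomaton.StepAny {Sig X A L : Type} {C : Finset Sig}
    (RA : RegisterAutomaton Sig X A L C) (c c' : L × (X → Sig)) : Prop :=
  ∃ (α : A) (d : Fin (RA.arity α) → Sig), RA.Step c.1 c.2 α d c'.1 c'.2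

/-- A configuration `⟨l, v⟩` is reachable: there is a run from the initial location
(with an arbitrary initial valuation) ending in `⟨l, v⟩`. -/
def RegisterAutomaton.Reachable {Sig X A L : Type} {C : Finset Sig}
    (RA : RegisterAutomaton Sig X A L C) (l : L) (v : X → Sig) : Prop :=
  ∃ v₀ : X → Sig, Relation.ReflTransGen RA.StepAny (RA.init, v₀) (l, v)

/-- `⟨l, S⟩ ⇝ ⟨l', S'⟩` for sets of valuations (representative configurations):
every member of `S` steps to some member of `S'` and vice versa. -/
def RegisterAutomaton.RepStep {Sig X A L : Type} {C : Finset Sig}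
    (RA : RegisterAutomaton Sig X A L C) (l : L) (S : Set (X → Sig)) (l' : L)
    (S' : Set (X → Sig)) : Prop :=
  (∀ u ∈ S, ∃ u' ∈ S', ∃ (α : A) (d : Fin (RA.arity α) → Sig), RA.Step l u α d l' u') ∧
  (∀ u' ∈ S', ∃ u ∈ S, ∃ (α : A) (d : Fin (RA.arity α) → Sig), RA.Step l u α d l' u')

theorem Term.val_perm {X Sig : Type} {n : ℕ} {C : Finset Sig} (σ : Equiv.Perm Sig)
    (hσ : ∀ c ∈ C, σ c = c) (v : X → Sig) (d : Fin n → Sig) (e : Term X Sig n)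
    (he : Term.ConstIn C e) :
    Term.val (fun x => σ (v x)) (fun i => σ (d i)) e = σ (Term.val v d e) := by
  cases e with
  | reg x => rfl
  | par i => rfl
  | const c => simp [Term.val, Term.ConstIn] at *; exact (hσ c he).symm

/-- If `⟨l, v⟩ →^{α(d̄)} ⟨l', v'⟩`, then `⟨l, σ∘v⟩ →^{α(σ(d̄))} ⟨l', σ∘v'⟩` for every
automorphism `σ` of the alphabet invariant on `C`. -/
theorem step_invariant {Sig X A L : Type} [Infinite Sig] [Finite X] [Finite A] [Finite L]
    {C : Finset Sig} (RA : RegisterAutomaton Sig X A L C) (l l' : L) (v v' : X → Sig)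
    (α : A) (d : Fin (RA.arity α) → Sig) (h : RA.Step l v α d l' v')
    (σ : Equiv.Perm Sig) (hσ : ∀ c ∈ C, σ c = c) :
    RA.Step l (fun x => σ (v x)) α (fun i => σ (d i)) l' (fun x => σ (v' x)) := by
  obtain ⟨g, π, hΔ, hg, hv'⟩ := h
  obtain ⟨⟨hgC, hπC⟩, _⟩ := RA.wf _ hΔ
  refine ⟨g, π, hΔ, ?_, ?_⟩
  · intro a ha
    have hs := hg a ha
    have hc := hgC a ha
    cases a with
    | eq e f =>
      simp only [Atom.Sat] at *
      rw [Term.val_perm σ hσ v d e hc.1, Term.val_perm σ hσ v d f hc.2, hs]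
    | ne e f =>
      simp only [Atom.Sat] at *
      rw [Term.val_perm σ hσ v d e hc.1, Term.val_perm σ hσ v d f hc.2]
      exact fun h => hs (σ.injective h)
  · intro p hp
    simp only [Term.val_perm σ hσ v d p.2 (hπC p hp)]; exact congrArg σ (hv' p hp)
end

section
/- In a register automaton (Σ, A, X, L, l₀, Δ), the set of reachable configurations is closed under ∼_C: if ⟨l, v⟩ is reachable and u ∼_C v, then ⟨l, u⟩ is reachable. -/
lemma term_val_comp {X Sig : Type} {n : ℕ} {C : Finset Sig} (τ : Equiv.Perm Sig)
    (hτ : ∀ c ∈ C, τ c = c) (v : X → Sig) (d : Fin n → Sig) (e : Term X Sig n)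
    (he : Term.ConstIn C e) :
    Term.val (τ ∘ v) (τ ∘ d) e = τ (Term.val v d e) := by
  cases e with
  | reg x => rfl
  | par i => rfl
  | const c => exact (hτ c he).symm

lemma step_perm {Sig X A L : Type} {C : Finset Sig}
    (RA : RegisterAutomaton Sig X A L C) (τ : Equiv.Perm Sig) (hτ : ∀ c ∈ C, τ c = c)
    {l : L} {v : X → Sig} {α : A} {d : Fin (RA.arity α) → Sig} {l' : L} {v' : X → Sig}
    (h : RA.Step l v α d l' v') :
    RA.Step l (τ ∘ v) α (τ ∘ d) l' (τ ∘ v') := by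
  obtain ⟨g, π, ht, hg, hv'⟩ := h
  obtain ⟨⟨hgc, hπc⟩, -⟩ := RA.wf _ ht
  refine ⟨g, π, ht, ?_, ?_⟩
  · intro a ha
    have hc := hgc a ha
    have hs := hg a ha
    cases a with
    | eq e f =>
        simp only [Atom.Sat] at hs ⊢
        rw [term_val_comp τ hτ v d e hc.1, term_val_comp τ hτ v d f hc.2, hs]
    | ne e f =>
        simp only [Atom.Sat] at hs ⊢
        rw [term_val_comp τ hτ v d e hc.1, term_val_comp τ hτ v d f hc.2]
        exact fun h => hs (τ.injective h)
  · intro p hp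
    have := hv' p hp
    simp only [Function.comp_apply, this, term_val_comp τ hτ v d p.2 (hπc p hp)]

lemma reach_perm {Sig X A L : Type} {C : Finset Sig}
    (RA : RegisterAutomaton Sig X A L C) (τ : Equiv.Perm Sig) (hτ : ∀ c ∈ C, τ c = c)
    {c c' : L × (X → Sig)} (h : Relation.ReflTransGen RA.StepAny c c') :
    Relation.ReflTransGen RA.StepAny (c.1, τ ∘ c.2) (c'.1, τ ∘ c'.2) := by
  induction h with
  | refl => exact .refl
  | tail _ hstep ih =>
      obtain ⟨α, d, hs⟩ := hstep
      exact ih.tail ⟨α, τ ∘ d, step_perm RA τ hτ hs⟩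

/-- The set of reachable configurations is closed under `∼_C`: if `⟨l, v⟩` is reachable
and `u ∼_C v`, then `⟨l, u⟩` is reachable. -/
theorem reachable_closed_under_equivC {Sig X A L : Type} [Infinite Sig] [Finite X] [Finite A]
    [Finite L] {C : Finset Sig} (RA : RegisterAutomaton Sig X A L C) (l : L) (u v : X → Sig)
    (hreach : RA.Reachable l v) (huv : EquivC C u v) :
    RA.Reachable l u := by
  obtain ⟨σ, hσC, hσ⟩ := huv
  obtain ⟨v₀, hrun⟩ := hreach
  have hτC : ∀ c ∈ C, σ.symm c = c := fun c hc => by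
    have := hσC c hc; exact σ.injective (by simp [this])
  have hu : σ.symm ∘ v = u := funext fun x => by
    have := hσ x; exact σ.injective (by simp [this])
  refine ⟨σ.symm ∘ v₀, ?_⟩
  have := reach_perm RA σ.symm hτC hrun
  simpa [hu] using this
end

section
/- Let (Σ, A, X, L, l₀, Δ) be a register automaton, l_0, …, l_k ∈ L locations, and w_0, …, w_k : X → Σ valuations. There exist valuations v_0 ∈ [w_0], …, v_k ∈ [w_k] and data symbols α_i(d̄^i) such that ⟨l_i, v_i⟩ →^{α_i(d̄^i)} ⟨l_{i+1}, v_{i+1}⟩ for every 0 ≤ i < k, if and only if ⟨l_i, [w_i]⟩ ⇝ ⟨l_{i+1}, [w_{i+1}]⟩ for every 0 ≤ i < k. -/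
lemma equivC_refl {X Sig : Type} (C : Finset Sig) (v : X → Sig) : EquivC C v v :=
  ⟨Equiv.refl Sig, fun _ _ => rfl, fun _ => rfl⟩

lemma EquivC.symm' {X Sig : Type} {C : Finset Sig} {u v : X → Sig} (h : EquivC C u v) :
    EquivC C v u := by
  obtain ⟨σ, h1, h2⟩ := h
  refine ⟨σ.symm, fun c hc => ?_, fun x => ?_⟩
  · conv_lhs => rw [← h1 c hc]
    exact σ.symm_apply_apply c
  · rw [← h2 x]; exact σ.symm_apply_apply (u x)

lemma EquivC.trans' {X Sig : Type} {C : Finset Sig} {u v w : X → Sig}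
    (h : EquivC C u v) (h' : EquivC C v w) : EquivC C u w := by
  obtain ⟨σ, h1, h2⟩ := h; obtain ⟨τ, h1', h2'⟩ := h'
  exact ⟨σ.trans τ, fun c hc => by simp [Equiv.trans_apply, h1 c hc, h1' c hc],
    fun x => by simp [Equiv.trans_apply, h2 x, h2' x]⟩

lemma Term.val_comp {X Sig : Type} {n : ℕ} {C : Finset Sig} (σ : Equiv.Perm Sig)
    (hσ : ∀ c ∈ C, σ c = c) (v : X → Sig) (d : Fin n → Sig) :
    ∀ e : Term X Sig n, Term.ConstIn C e → Term.val (σ ∘ v) (σ ∘ d) e = σ (Term.val v d e)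
  | .reg _, _ => rfl
  | .par _, _ => rfl
  | .const c, h => (hσ c h).symm

lemma RegisterAutomaton.Step.perm {Sig X A L : Type} {C : Finset Sig}
    {RA : RegisterAutomaton Sig X A L C} {l l' : L} {v v' : X → Sig} {α : A}
    {d : Fin (RA.arity α) → Sig} (σ : Equiv.Perm Sig) (hσ : ∀ c ∈ C, σ c = c)
    (h : RA.Step l v α d l' v') : RA.Step l (σ ∘ v) α (σ ∘ d) l' (σ ∘ v') := by
  obtain ⟨g, π, hΔ, hg, hπ⟩ := h
  obtain ⟨⟨hgC, hπC⟩, -⟩ := RA.wf _ hΔ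
  refine ⟨g, π, hΔ, ?_, ?_⟩
  · intro a ha
    have hC := hgC a ha
    have hs := hg a ha
    cases a with
    | eq e f =>
      simp only [Atom.Sat] at hs ⊢
      rw [Term.val_comp σ hσ v d e hC.1, Term.val_comp σ hσ v d f hC.2, hs]
    | ne e f =>
      simp only [Atom.Sat] at hs ⊢
      rw [Term.val_comp σ hσ v d e hC.1, Term.val_comp σ hσ v d f hC.2]
      exact fun hh => hs (σ.injective hh)
  · intro p hp
    have hv := hπ p hp
    show σ (v' p.1) = _
    rw [Term.val_comp σ hσ v d p.2 (hπC p hp), hv]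

lemma perm_mem_eqClass {X Sig : Type} {C : Finset Sig} {v w : X → Sig}
    {σ : Equiv.Perm Sig} (hσ : ∀ c ∈ C, σ c = c) (h : v ∈ eqClass C w) :
    σ ∘ v ∈ eqClass C w := by
  refine EquivC.trans' ?_ h
  refine ⟨σ.symm, fun c hc => ?_, fun x => σ.symm_apply_apply (v x)⟩
  conv_lhs => rw [← hσ c hc]
  exact σ.symm_apply_apply c

/-- There is a run through locations `l₀,…,l_k` with valuations in the classes
`[w₀],…,[w_k]` iff `⟨l_i, [w_i]⟩ ⇝ ⟨l_{i+1}, [w_{i+1}]⟩` for every `0 ≤ i < k`. -/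
theorem run_iff_repSteps {Sig X A L : Type} [Infinite Sig] [Finite X] [Finite A] [Finite L]
    {C : Finset Sig} (RA : RegisterAutomaton Sig X A L C) (k : ℕ)
    (ls : Fin (k + 1) → L) (ws : Fin (k + 1) → (X → Sig)) :
    (∃ vs : Fin (k + 1) → (X → Sig), (∀ i, vs i ∈ eqClass C (ws i)) ∧
        ∀ i : Fin k, ∃ (α : A) (d : Fin (RA.arity α) → Sig),
          RA.Step (ls i.castSucc) (vs i.castSucc) α d (ls i.succ) (vs i.succ)) ↔
      (∀ i : Fin k, RA.RepStep (ls i.castSucc) (eqClass C (ws i.castSucc))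
        (ls i.succ) (eqClass C (ws i.succ))) := by
  classical
  constructor
  · rintro ⟨vs, hvs, hstep⟩ i
    constructor
    · intro u hu
      -- EquivC C (vs i.castSucc) u
      obtain ⟨σ, hσC, hσ⟩ := EquivC.trans' (hvs i.castSucc) (EquivC.symm' hu)
      obtain ⟨α, d, hst⟩ := hstep i
      refine ⟨σ ∘ vs i.succ, perm_mem_eqClass hσC (hvs i.succ), α, σ ∘ d, ?_⟩
      have h' := hst.perm σ hσC
      rwa [show σ ∘ vs i.castSucc = u from funext hσ] at h'
    · intro u' hu'
      obtain ⟨σ, hσC, hσ⟩ := EquivC.trans' (hvs i.succ) (EquivC.symm' hu')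
      obtain ⟨α, d, hst⟩ := hstep i
      refine ⟨σ ∘ vs i.castSucc, perm_mem_eqClass hσC (hvs i.castSucc), α, σ ∘ d, ?_⟩
      have h' := hst.perm σ hσC
      rwa [show σ ∘ vs i.succ = u' from funext hσ] at h'
  · intro h
    have H : ∀ (i : Fin k) (u : X → Sig), ∃ u', u ∈ eqClass C (ws i.castSucc) →
        u' ∈ eqClass C (ws i.succ) ∧
          ∃ α d, RA.Step (ls i.castSucc) u α d (ls i.succ) u' := by
      intro i u
      by_cases hu : u ∈ eqClass C (ws i.castSucc)
      · obtain ⟨u', hu', hs⟩ := (h i).1 u hu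
        exact ⟨u', fun _ => ⟨hu', hs⟩⟩
      · exact ⟨u, fun hc => absurd hc hu⟩
    choose next hnext using H
    let f : ℕ → (X → Sig) := fun m => Nat.rec (ws 0) (fun m prev =>
      if hm : m < k then next ⟨m, hm⟩ prev else prev) m
    have hf0 : f 0 = ws 0 := rfl
    have hfs : ∀ m, f (m + 1) = if hm : m < k then next ⟨m, hm⟩ (f m) else f m :=
      fun _ => rfl
    have hmem : ∀ m (hm : m < k + 1), f m ∈ eqClass C (ws ⟨m, hm⟩) := by
      intro m
      induction m with
      | zero =>
        intro hm
        have e : (⟨0, hm⟩ : Fin (k + 1)) = 0 := by ext; simp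
        rw [hf0, e]
        exact equivC_refl C (ws 0)
      | succ m ih =>
        intro hm
        have hmk : m < k := by omega
        have hprev : f m ∈ eqClass C (ws (⟨m, hmk⟩ : Fin k).castSucc) :=
          ih (by omega)
        have h' := hnext ⟨m, hmk⟩ (f m) hprev
        have hfm : f (m + 1) = next ⟨m, hmk⟩ (f m) := by
          rw [hfs]; exact dif_pos hmk
        rw [hfm]
        exact h'.1
    refine ⟨fun j => f j.val, fun i => hmem i.val i.isLt, fun i => ?_⟩
    have hprev : f i.val ∈ eqClass C (ws i.castSucc) := hmem i.val (by omega)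
    obtain ⟨-, α, d, hs⟩ := hnext ⟨i.val, i.isLt⟩ (f i.val) hprev
    refine ⟨α, d, ?_⟩
    show RA.Step (ls i.castSucc) (f i.val) α d (ls i.succ) (f (i.val + 1))
    have hfm : f (i.val + 1) = next ⟨i.val, i.isLt⟩ (f i.val) := by
      rw [hfs]; exact dif_pos i.isLt
    rw [hfm]
    exact hs
end

section
/- For any valuations u, v : X → Σ, [u] = [v] if and only if R_{[u]} = R_{[v]}; that is, u ∼_C v if and only if the representative matrices of u and v agree in every entry. -/
/-- Entries of a representative matrix: `0̄`, `1̄`, or a constant of the alphabet. -/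
inductive MEntry (Sig : Type) where
  | zero : MEntry Sig
  | one : MEntry Sig
  | const (c : Sig) : MEntry Sig

/-- The representative matrix `R_{[v]}`: entry `(x, y)` is `v x` if `v x = v y ∈ C`,
`1̄` if `v x = v y ∉ C`, and `0̄` otherwise. -/
def repMatrix {X Sig : Type} [DecidableEq Sig] (C : Finset Sig) (v : X → Sig)
    (x y : X) : MEntry Sig :=
  if v x = v y then (if v x ∈ C then MEntry.const (v x) else MEntry.one) else MEntry.zero

/-- `[u] = [v]` iff `R_{[u]} = R_{[v]}`: two valuations are `∼_C`-equivalent iff their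
representative matrices agree in every entry. -/
theorem equivC_iff_repMatrix_eq {X Sig : Type} [Infinite Sig] [Finite X] [DecidableEq Sig]
    (C : Finset Sig) (u v : X → Sig) :
    EquivC C u v ↔ ∀ x y : X, repMatrix C u x y = repMatrix C v x y := by
  classical
  constructor
  · rintro ⟨σ, hC, hσ⟩ x y
    have heq : u x = u y ↔ v x = v y := by
      rw [← hσ x, ← hσ y]; exact ⟨fun h => by rw [h], fun h => σ.injective h⟩
    have hmem : u x ∈ C ↔ v x ∈ C := by
      constructor
      · intro h; rw [← hσ x, hC _ h]; exact h
      · intro h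
        have : u x = v x := σ.injective (by rw [hσ x, hC _ h])
        rwa [this]
    have hval : u x ∈ C → u x = v x := fun h => σ.injective (by rw [hσ x, hC _ (hmem.mp h)])
    unfold repMatrix
    by_cases h1 : u x = u y
    · rw [if_pos h1, if_pos (heq.mp h1)]
      by_cases h2 : u x ∈ C
      · rw [if_pos h2, if_pos (hmem.mp h2), hval h2]
      · rw [if_neg h2, if_neg (fun h => h2 (hmem.mpr h))]
    · rw [if_neg h1, if_neg (fun h => h1 (heq.mpr h))]
  · intro H
    -- extract consequences
    have heq : ∀ x y, u x = u y ↔ v x = v y := by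
      intro x y
      have := H x y
      unfold repMatrix at this
      constructor
      · intro h
        by_contra h'
        rw [if_pos h, if_neg h'] at this
        by_cases h2 : u x ∈ C <;> simp [h2] at this
      · intro h
        by_contra h'
        rw [if_neg h', if_pos h] at this
        by_cases h2 : v x ∈ C <;> simp [h2] at this
    have hdiag : ∀ x, (u x ∈ C ↔ v x ∈ C) ∧ (u x ∈ C → u x = v x) := by
      intro x
      have := H x x
      unfold repMatrix at this
      rw [if_pos rfl, if_pos rfl] at this
      by_cases h1 : u x ∈ C <;> by_cases h2 : v x ∈ C <;>
        simp [h1, h2] at this <;> simp [h1, h2, this]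
    -- the finite set to extend from
    set s : Set Sig := Set.range u ∪ ↑C with hs_def
    have hsfin : s.Finite := (Set.finite_range u).union C.finite_toSet
    -- the partial map
    let g : Sig → Sig := fun a => if h : ∃ x, u x = a then v h.choose else a
    have hgu : ∀ x, g (u x) = v x := by
      intro x
      have hex : ∃ y, u y = u x := ⟨x, rfl⟩
      simp only [g, dif_pos hex]
      exact (heq _ _).mp hex.choose_spec
    have hgC : ∀ c ∈ C, g c = c := by
      intro c hc
      by_cases hex : ∃ x, u x = c
      · obtain ⟨x, hx⟩ := hex
        rw [← hx, hgu x, ← (hdiag x).2 (hx ▸ hc), hx]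
      · simp only [g, dif_neg hex]
    have hginj : ∀ a ∈ s, ∀ b ∈ s, g a = g b → a = b := by
      intro a ha b hb hab
      have key : ∀ c ∈ s, (∃ x, u x = c ∧ g c = v x) ∨ (c ∈ C ∧ g c = c) := by
        intro c hc
        by_cases hex : ∃ x, u x = c
        · obtain ⟨x, hx⟩ := hex
          exact Or.inl ⟨x, hx, by rw [← hx, hgu]⟩
        · rcases hc with hc | hc
          · exact absurd hc hex
          · exact Or.inr ⟨hc, hgC c hc⟩
      rcases key a ha with ⟨x, hx, hgx⟩ | ⟨hac, hga⟩ <;>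
        rcases key b hb with ⟨y, hy, hgy⟩ | ⟨hbc, hgb⟩
      · rw [hgx, hgy] at hab
        rw [← hx, ← hy]; exact (heq x y).mpr hab
      · -- g a = v x, g b = b ∈ C
        rw [hgx, hgb] at hab
        have hvC : v x ∈ C := hab ▸ hbc
        have := ((hdiag x).2 ((hdiag x).1.mpr hvC))
        rw [← hx, this, hab]
      · rw [hga, hgy] at hab
        have hvC : v y ∈ C := hab ▸ hac
        have := ((hdiag y).2 ((hdiag y).1.mpr hvC))
        rw [← hy, hab, ← this]
      · rw [hga, hgb] at hab; exact hab
    -- build embedding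
    let f : s ↪ Sig := ⟨fun a => g a, fun a b hab => Subtype.ext (hginj a a.2 b b.2 hab)⟩
    have hcard : Cardinal.mk s < Cardinal.mk Sig :=
      lt_of_lt_of_le hsfin.lt_aleph0 (Cardinal.aleph0_le_mk Sig)
    obtain ⟨σ, hσ⟩ := Cardinal.extend_function_of_lt f hcard ⟨Equiv.refl Sig⟩
    refine ⟨σ, ?_, ?_⟩
    · intro c hc
      have : σ c = g c := hσ ⟨c, Or.inr hc⟩
      rw [this, hgC c hc]
    · intro x
      have : σ (u x) = g (u x) := hσ ⟨u x, Or.inl ⟨x, rfl⟩⟩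
      rw [this, hgu]
end

section
/- Let (Σ, A, X, L, l₀, Δ) be a register automaton, l ∈ L, u, v : X → Σ valuations, and f a CTL(X, L) formula. If u ∼_C v, then ⟨l, u⟩ ⊨ f if and only if ⟨l, v⟩ ⊨ f. -/
/-- CTL(X, L) formulas. -/
inductive CTL (X Sig L : Type) where
  | loc (l : L)
  | eqReg (x y : X)
  | eqConst (x : X) (c : Sig)
  | not (f : CTL X Sig L)
  | and (f₀ f₁ : CTL X Sig L)
  | EX (f : CTL X Sig L)
  | EU (f₀ f₁ : CTL X Sig L)
  | EG (f : CTL X Sig L)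

/-- Every constant appearing in the formula belongs to `C`. -/
def CTL.ConstIn {X Sig L : Type} (C : Finset Sig) : CTL X Sig L → Prop
  | .eqConst _ c => c ∈ C
  | .not f => CTL.ConstIn C f
  | .and f₀ f₁ => CTL.ConstIn C f₀ ∧ CTL.ConstIn C f₁
  | .EX f => CTL.ConstIn C f
  | .EU f₀ f₁ => CTL.ConstIn C f₀ ∧ CTL.ConstIn C f₁
  | .EG f => CTL.ConstIn C f
  | _ => True

/-- `⟨l, v⟩ ⊨ f`: CTL(X, L) satisfaction over a register automaton. -/
def RegisterAutomaton.Sat {Sig X A L : Type} {C : Finset Sig}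
    (RA : RegisterAutomaton Sig X A L C) : CTL X Sig L → L × (X → Sig) → Prop
  | .loc l', c => c.1 = l'
  | .eqReg x y, c => c.2 x = c.2 y
  | .eqConst x cst, c => c.2 x = cst
  | .not f, c => ¬ RA.Sat f c
  | .and f₀ f₁, c => RA.Sat f₀ c ∧ RA.Sat f₁ c
  | .EX f, c => ∃ c', RA.StepAny c c' ∧ RA.Sat f c'
  | .EU f₀ f₁, c => ∃ (k : ℕ) (p : ℕ → L × (X → Sig)), p 0 = c ∧
      (∀ i < k, RA.StepAny (p i) (p (i + 1))) ∧
      RA.Sat f₁ (p k) ∧ (∀ i < k, RA.Sat f₀ (p i))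
  | .EG f, c => ∃ p : ℕ → L × (X → Sig), p 0 = c ∧
      (∀ i, RA.StepAny (p i) (p (i + 1))) ∧ (∀ i, RA.Sat f (p i))

/- A permutation of the alphabet that fixes the constants commutes with the evaluation of every
term, so it maps runs to runs and preserves every atomic formula; hence it preserves satisfaction
of every CTL formula over those constants. -/

section Relabel

variable {Sig X : Type} {C : Finset Sig} {n : ℕ} {σ : Equiv.Perm Sig}

theorem Term.val_perm_s12 (hσ : ∀ c ∈ C, σ c = c) (w : X → Sig) (d : Fin n → Sig)
    {e : Term X Sig n} (he : e.ConstIn C) : e.val (σ ∘ w) (σ ∘ d) = σ (e.val w d) := by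
  cases e with
  | reg x => rfl
  | par i => rfl
  | const c => exact (hσ c he).symm

theorem Atom.sat_perm_iff (hσ : ∀ c ∈ C, σ c = c) (w : X → Sig) (d : Fin n → Sig)
    {a : Atom X Sig n} (ha : a.ConstIn C) : a.Sat (σ ∘ w) (σ ∘ d) ↔ a.Sat w d := by
  cases a with
  | eq e f => simp only [Atom.Sat, Term.val_perm_s12 hσ w d ha.1, Term.val_perm_s12 hσ w d ha.2,
      σ.injective.eq_iff]
  | ne e f => simp only [Atom.Sat, Term.val_perm_s12 hσ w d ha.1, Term.val_perm_s12 hσ w d ha.2,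
      ne_eq, σ.injective.eq_iff]

theorem Guard.sat_perm_iff (hσ : ∀ c ∈ C, σ c = c) (w : X → Sig) (d : Fin n → Sig)
    {g : Guard X Sig n} (hg : g.ConstIn C) : g.Sat (σ ∘ w) (σ ∘ d) ↔ g.Sat w d :=
  forall₂_congr fun a ha => Atom.sat_perm_iff hσ w d (hg a ha)

theorem Assignment.comp_mem_sem_perm_iff (hσ : ∀ c ∈ C, σ c = c) (w w' : X → Sig)
    (d : Fin n → Sig) {π : Assignment X Sig n} (hπ : π.ConstIn C) :
    σ ∘ w' ∈ π.Sem (σ ∘ w) (σ ∘ d) ↔ w' ∈ π.Sem w d :=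
  forall₂_congr fun p hp => by
    rw [Function.comp_apply, Term.val_perm_s12 hσ w d (hπ p hp), σ.injective.eq_iff]

end Relabel

namespace RegisterAutomaton

variable {Sig X A L : Type} {C : Finset Sig} (RA : RegisterAutomaton Sig X A L C)
  {σ : Equiv.Perm Sig}

theorem step_perm_iff (hσ : ∀ c ∈ C, σ c = c) {l l' : L} {α : A} {d : Fin (RA.arity α) → Sig}
    {w w' : X → Sig} : RA.Step l (σ ∘ w) α (σ ∘ d) l' (σ ∘ w') ↔ RA.Step l w α d l' w' :=
  exists₂_congr fun _ _ => and_congr_right fun hΔ =>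
    have hC := (RA.wf _ hΔ).1
    and_congr (Guard.sat_perm_iff hσ w d hC.1) (Assignment.comp_mem_sem_perm_iff hσ w w' d hC.2)

def relabel (σ : Equiv.Perm Sig) : L × (X → Sig) ≃ L × (X → Sig) :=
  (Equiv.refl L).prodCongr ((Equiv.refl X).arrowCongr σ)

theorem stepAny_relabel_iff (hσ : ∀ c ∈ C, σ c = c) {c c' : L × (X → Sig)} :
    RA.StepAny (relabel σ c) (relabel σ c') ↔ RA.StepAny c c' :=
  exists_congr fun _ => by
    rw [σ.surjective.comp_left.exists]
    exact exists_congr fun _ => RA.step_perm_iff hσ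

theorem sat_relabel_iff (hσ : ∀ c ∈ C, σ c = c) {f : CTL X Sig L} (hf : f.ConstIn C)
    (c : L × (X → Sig)) : RA.Sat f (relabel σ c) ↔ RA.Sat f c := by
  induction f generalizing c with
  | loc l' => rfl
  | eqReg x y => exact σ.injective.eq_iff
  | eqConst x a =>
    change σ (c.2 x) = a ↔ c.2 x = a
    conv_lhs => rw [← hσ a hf]
    exact σ.injective.eq_iff
  | not f ih => exact not_congr (ih hf c)
  | and f₀ f₁ ih₀ ih₁ => exact and_congr (ih₀ hf.1 c) (ih₁ hf.2 c)
  | EX f ih =>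
    simp only [Sat]
    rw [(relabel σ).surjective.exists]
    simp only [RA.stepAny_relabel_iff hσ, ih hf]
  | EU f₀ f₁ ih₀ ih₁ =>
    simp only [Sat]
    refine exists_congr fun k => ?_
    rw [(relabel σ).surjective.comp_left.exists]
    simp only [Function.comp_apply, (relabel σ).injective.eq_iff, RA.stepAny_relabel_iff hσ,
      ih₀ hf.1, ih₁ hf.2]
  | EG f ih =>
    simp only [Sat]
    rw [(relabel σ).surjective.comp_left.exists]
    simp only [Function.comp_apply, (relabel σ).injective.eq_iff, RA.stepAny_relabel_iff hσ,
      ih hf]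

end RegisterAutomaton

theorem ctl_sat_invariant_general {Sig X A L : Type}
    {C : Finset Sig} (RA : RegisterAutomaton Sig X A L C) (l : L) (u v : X → Sig)
    (f : CTL X Sig L) (hf : CTL.ConstIn C f) (huv : EquivC C u v) :
    RA.Sat f (l, u) ↔ RA.Sat f (l, v) := by
  obtain ⟨σ, hσ, hσu⟩ := huv
  have hv : (l, v) = RegisterAutomaton.relabel σ (l, u) :=
    Prod.ext rfl (funext fun x => (hσu x).symm)
  rw [hv, RA.sat_relabel_iff hσ hf]

/-- Any two configurations with `∼_C`-equivalent valuations satisfy the same CTL(X, L)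
formulas: if `u ∼_C v` then `⟨l, u⟩ ⊨ f` iff `⟨l, v⟩ ⊨ f`. -/
theorem ctl_sat_invariant {Sig X A L : Type} [Infinite Sig] [Finite X] [Finite A] [Finite L]
    {C : Finset Sig} (RA : RegisterAutomaton Sig X A L C) (l : L) (u v : X → Sig)
    (f : CTL X Sig L) (hf : CTL.ConstIn C f) (huv : EquivC C u v) :
    RA.Sat f (l, u) ↔ RA.Sat f (l, v) :=
  ctl_sat_invariant_general RA l u v f hf huv
end

section
/- Let (Σ, A, X, L, l₀, Δ) be a register automaton and f a CTL(X, L) formula. There exists a finite set W of valuations X → Σ such that ⊨_RA f (i.e., ⟨l₀, v⟩ ⊨ f for every valuation v) if and only if ⟨l₀, w⟩ ⊨ f for every w ∈ W; concretely, any set W containing one representative from each ∼_C-equivalence class of valuations has this property. -/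
/-! A permutation of the alphabet fixing the constants maps runs of the automaton to runs and
preserves every CTL formula over those constants, so satisfaction depends only on the
`∼_C`-class of the valuation. A class is determined by the equality type of the valuation
together with the constants, which ranges over a finite set; over an infinite alphabet, two
valuations of the same type are related by such a permutation, since a finite partial injection
extends to a permutation. -/

theorem exists_perm_eqOn_of_injOn {α : Type*} [Infinite α] {s : Set α} (hs : s.Finite)
    {F : α → α} (hF : s.InjOn F) : ∃ σ : Equiv.Perm α, s.EqOn σ F := by
  have hcard : Cardinal.mk s < Cardinal.mk α :=
    hs.lt_aleph0.trans_le (Cardinal.aleph0_le_mk α)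
  obtain ⟨σ, hσ⟩ :=
    Cardinal.extend_function_of_lt ⟨s.domRestrict F, hF.injective⟩ hcard ⟨Equiv.refl α⟩
  exact ⟨σ, fun a ha => hσ ⟨a, ha⟩⟩

theorem exists_perm_comp_eq_of_forall_eq_iff {ι α : Type*} [Finite ι] [Infinite α]
    {a b : ι → α} (h : ∀ i j, a i = a j ↔ b i = b j) :
    ∃ σ : Equiv.Perm α, ⇑σ ∘ a = b := by
  have hfac : b.FactorsThrough a := fun i j hij => (h i j).1 hij
  have hinj : (Set.range a).InjOn (Function.extend a b id) := by
    rintro _ ⟨i, rfl⟩ _ ⟨j, rfl⟩ hij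
    rw [hfac.extend_apply, hfac.extend_apply] at hij
    exact (h i j).2 hij
  obtain ⟨σ, hσ⟩ := exists_perm_eqOn_of_injOn (Set.finite_range a) hinj
  exact ⟨σ, funext fun i => (hσ ⟨i, rfl⟩).trans (hfac.extend_apply id i)⟩

section EquivCClasses

variable {Sig X : Type} {C : Finset Sig}

def eqType (C : Finset Sig) (v : X → Sig) : C ⊕ X → C ⊕ X → Prop :=
  fun i j => Sum.elim Subtype.val v i = Sum.elim Subtype.val v j

theorem equivC_of_eqType_eq [Infinite Sig] [Finite X] {u v : X → Sig}
    (h : eqType C u = eqType C v) : EquivC C u v := by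
  obtain ⟨σ, hσ⟩ := exists_perm_comp_eq_of_forall_eq_iff fun i j =>
    (iff_of_eq (congrFun (congrFun h i) j) : _ ↔ _)
  exact ⟨σ, fun c hc => congrFun hσ (.inl ⟨c, hc⟩), fun x => congrFun hσ (.inr x)⟩

theorem exists_finite_forall_exists_equivC (C : Finset Sig) [Infinite Sig] [Finite X] :
    ∃ W : Set (X → Sig), W.Finite ∧ ∀ v : X → Sig, ∃ w ∈ W, EquivC C w v := by
  have : Nonempty (X → Sig) := ⟨fun _ => Classical.arbitrary Sig⟩
  refine ⟨Set.range (Function.invFun (eqType C)), Set.finite_range _, fun v => ?_⟩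
  exact ⟨_, Set.mem_range_self _, equivC_of_eqType_eq (Function.invFun_eq ⟨v, rfl⟩)⟩

end EquivCClasses

section Invariance

variable {Sig X : Type} {C : Finset Sig} {σ : Equiv.Perm Sig} {n : ℕ}

theorem Term.val_comp_perm (hσ : ∀ c ∈ C, σ c = c) {e : Term X Sig n} (he : e.ConstIn C)
    (v : X → Sig) (d : Fin n → Sig) :
    Term.val (σ ∘ v) (σ ∘ d) e = σ (Term.val v d e) := by
  cases e with
  | reg x => rfl
  | par i => rfl
  | const c => exact (hσ c he).symm

theorem Guard.sat_comp_perm (hσ : ∀ c ∈ C, σ c = c) {g : Guard X Sig n} (hg : g.ConstIn C)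
    (v : X → Sig) (d : Fin n → Sig) :
    Guard.Sat (σ ∘ v) (σ ∘ d) g ↔ Guard.Sat v d g := by
  refine forall₂_congr fun a ha => ?_
  cases a with
  | eq e e' =>
    simp only [Atom.Sat, Term.val_comp_perm hσ (hg _ ha).1, Term.val_comp_perm hσ (hg _ ha).2,
      σ.injective.eq_iff]
  | ne e e' =>
    simp only [Atom.Sat, Term.val_comp_perm hσ (hg _ ha).1, Term.val_comp_perm hσ (hg _ ha).2,
      σ.injective.ne_iff]

theorem Assignment.comp_perm_mem_sem (hσ : ∀ c ∈ C, σ c = c) {π : Assignment X Sig n}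
    (hπ : π.ConstIn C) {v v' : X → Sig} {d : Fin n → Sig} (h : v' ∈ π.Sem v d) :
    ⇑σ ∘ v' ∈ π.Sem (σ ∘ v) (σ ∘ d) := fun p hp => by
  rw [Term.val_comp_perm hσ (hπ p hp), ← h p hp]
  rfl

variable {A L : Type} {RA : RegisterAutomaton Sig X A L C}

theorem RegisterAutomaton.StepAny.map_perm (hσ : ∀ c ∈ C, σ c = c) {c c' : L × (X → Sig)}
    (h : RA.StepAny c c') :
    RA.StepAny (c.1, σ ∘ c.2) (c'.1, σ ∘ c'.2) := by
  obtain ⟨α, d, g, π, hΔ, hg, hπ⟩ := h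
  obtain ⟨⟨hgC, hπC⟩, -⟩ := RA.wf _ hΔ
  exact ⟨α, σ ∘ d, g, π, hΔ, (Guard.sat_comp_perm hσ hgC _ _).2 hg,
    Assignment.comp_perm_mem_sem hσ hπC hπ⟩

theorem RegisterAutomaton.Sat.map_perm {f : CTL X Sig L} (hf : f.ConstIn C)
    (hσ : ∀ c ∈ C, σ c = c) {c : L × (X → Sig)} (h : RA.Sat f c) :
    RA.Sat f (c.1, σ ∘ c.2) := by
  induction f generalizing σ c with
  | loc l => exact h
  | eqReg x y => exact congrArg σ h
  | eqConst x a => exact (congrArg σ h).trans (hσ a hf)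
  | not f ih =>
    -- `σ⁻¹` also fixes `C` and transports the negated formula back.
    refine fun h' => h ?_
    have hσ' : ∀ a ∈ C, σ.symm a = a := fun a ha => σ.symm_apply_eq.2 (hσ a ha).symm
    simpa [Function.comp_def] using ih hf hσ' h'
  | and f₀ f₁ ih₀ ih₁ => exact ⟨ih₀ hf.1 hσ h.1, ih₁ hf.2 hσ h.2⟩
  | EX f ih =>
    obtain ⟨c', hstep, hc'⟩ := h
    exact ⟨_, hstep.map_perm hσ, ih hf hσ hc'⟩
  | EU f₀ f₁ ih₀ ih₁ =>
    obtain ⟨k, p, rfl, hstep, hk, hpre⟩ := h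
    exact ⟨k, fun i => ((p i).1, σ ∘ (p i).2), rfl, fun i hi => (hstep i hi).map_perm hσ,
      ih₁ hf.2 hσ hk, fun i hi => ih₀ hf.1 hσ (hpre i hi)⟩
  | EG f ih =>
    obtain ⟨p, rfl, hstep, hall⟩ := h
    exact ⟨fun i => ((p i).1, σ ∘ (p i).2), rfl, fun i => (hstep i).map_perm hσ,
      fun i => ih hf hσ (hall i)⟩

end Invariance

theorem RegisterAutomaton.Sat.of_equivC {Sig X A L : Type} {C : Finset Sig}
    {RA : RegisterAutomaton Sig X A L C} {f : CTL X Sig L} (hf : f.ConstIn C) {l : L}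
    {u v : X → Sig} (huv : EquivC C u v) (h : RA.Sat f (l, u)) : RA.Sat f (l, v) := by
  obtain ⟨σ, hσ, hσuv⟩ := huv
  rw [← show ⇑σ ∘ u = v from funext hσuv]
  exact h.map_perm hf hσ

theorem RegisterAutomaton.forall_sat_iff_of_forall_exists_equivC {Sig X A L : Type}
    {C : Finset Sig} (RA : RegisterAutomaton Sig X A L C) {f : CTL X Sig L} (hf : f.ConstIn C)
    (l : L) {W : Set (X → Sig)} (hW : ∀ v : X → Sig, ∃ w ∈ W, EquivC C w v) :
    (∀ v : X → Sig, RA.Sat f (l, v)) ↔ ∀ w ∈ W, RA.Sat f (l, w) := by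
  refine ⟨fun h w _ => h w, fun h v => ?_⟩
  obtain ⟨w, hw, hwv⟩ := hW v
  exact (h w hw).of_equivC hf hwv

theorem modelCheck_via_representatives_general {Sig X A L : Type} [Infinite Sig] [Finite X]
    {C : Finset Sig} (RA : RegisterAutomaton Sig X A L C)
    (f : CTL X Sig L) (hf : CTL.ConstIn C f) :
    (∃ W : Set (X → Sig), W.Finite ∧
        ((∀ v : X → Sig, RA.Sat f (RA.init, v)) ↔ ∀ w ∈ W, RA.Sat f (RA.init, w))) ∧
    (∀ W : Set (X → Sig), (∀ v : X → Sig, ∃ w ∈ W, EquivC C w v) →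
        ((∀ v : X → Sig, RA.Sat f (RA.init, v)) ↔ ∀ w ∈ W, RA.Sat f (RA.init, w))) := by
  have hrep := fun W : Set (X → Sig) =>
    RA.forall_sat_iff_of_forall_exists_equivC hf RA.init (W := W)
  obtain ⟨W, hWfin, hW⟩ := exists_finite_forall_exists_equivC (X := X) C
  exact ⟨⟨W, hWfin, hrep W hW⟩, hrep⟩

/-- Model checking reduces to finitely many valuations: there is a finite set `W` of valuations
such that `⊨_RA f` (i.e. `⟨l₀, v⟩ ⊨ f` for every valuation `v`) iff `⟨l₀, w⟩ ⊨ f` for every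
`w ∈ W`; concretely, any set `W` containing a representative of each `∼_C`-equivalence class
has this property. -/
theorem modelCheck_via_representatives {Sig X A L : Type} [Infinite Sig] [Finite X] [Finite A]
    [Finite L] {C : Finset Sig} (RA : RegisterAutomaton Sig X A L C)
    (f : CTL X Sig L) (hf : CTL.ConstIn C f) :
    (∃ W : Set (X → Sig), W.Finite ∧
        ((∀ v : X → Sig, RA.Sat f (RA.init, v)) ↔ ∀ w ∈ W, RA.Sat f (RA.init, w))) ∧
    (∀ W : Set (X → Sig), (∀ v : X → Sig, ∃ w ∈ W, EquivC C w v) →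
        ((∀ v : X → Sig, RA.Sat f (RA.init, v)) ↔ ∀ w ∈ W, RA.Sat f (RA.init, w))) :=
  modelCheck_via_representatives_general RA f hf
end
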